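/- Let p be a probability density on ℝⁿ. Then the supremum, over all triples (q₀, q₁, π) where q₀ and q₁ are probability densities on ℝⁿ, π ∈ (0,1), and π·q₁(x) + (1−π)·q₀(x) = p(x) for Lebesgue-almost every x, of the Jensen–Shannon divergence JS(q₀ ‖ q₁), equals the supremum, over all measurable L : ℝⁿ → ℝ with 0 ≤ L(x) ≤ 1 for all x and ∫ L p ∈ (0,1), of ½ ∫ [ f₁(x) · log( f₁(x)/(f₁(x)+f₀(x)) ) + f₀(x) · log( f₀(x)/(f₁(x)+f₀(x)) ) ] p(x) dx + log 2, where f₁(x) := L(x)/∫Lp and f₀(x) := (1−L(x))/(1−∫Lp). -/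

import Mathlib

open MeasureTheory

/-- Jensen–Shannon divergence between two densities on `ℝⁿ`:
`JS(a ‖ b) = ½ ∫ a log(a/m) + ½ ∫ b log(b/m)` with `m = (a+b)/2` (Lebesgue integrals,
natural logs, convention `0 · log 0 = 0`). -/
noncomputable def JSdiv {n : ℕ} (a b : (Fin n → ℝ) → ℝ) : ℝ :=
  (1 / 2) * (∫ x, a x * Real.log (a x / ((a x + b x) / 2))) +
    (1 / 2) * (∫ x, b x * Real.log (b x / ((a x + b x) / 2)))

/-! A mixture decomposition `π q₁ + (1 - π) q₀ = p` is the same thing as a soft labelling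
`L = π q₁ / p` with values in `[0, 1]`: then `q₁ = (L / π) p`, `q₀ = ((1 - L) / (1 - π)) p` and
`π = ∫ L p`. Writing both conditionals as densities `f p` relative to `p`, the factor `p`
cancels inside the logarithms of the Jensen–Shannon divergence, and `∫ f₀ p = ∫ f₁ p = 1`
turns the averaging by `2` into the additive constant `log 2`. Hence the two sets of values
coincide, and so do their suprema. -/

theorem abs_mul_log_div_le {a s : ℝ} (ha : 0 ≤ a) (has : a ≤ s) :
    |a * Real.log (a / s)| ≤ s := by
  rcases ha.eq_or_lt with rfl | ha
  · simpa using ha.trans has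
  have hs : 0 < s := ha.trans_le has
  have hlog : Real.log (a / s) ≤ 0 := Real.log_nonpos (by positivity) ((div_le_one hs).2 has)
  rw [abs_of_nonpos (mul_nonpos_of_nonneg_of_nonpos ha.le hlog), ← mul_neg, ← Real.log_inv,
    inv_div]
  calc a * Real.log (s / a) ≤ a * (s / a - 1) :=
        mul_le_mul_of_nonneg_left (Real.log_le_sub_one_of_pos (by positivity)) ha.le
    _ = s - a := by field_simp
    _ ≤ s := by linarith

theorem mul_log_mul_div_half_add {a b P : ℝ} (ha : 0 ≤ a) (hb : 0 ≤ b) (hP : 0 ≤ P) :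
    a * P * Real.log (a * P / ((a * P + b * P) / 2)) =
      a * Real.log (a / (a + b)) * P + a * P * Real.log 2 := by
  rcases hP.eq_or_lt with rfl | hP
  · simp
  rcases ha.eq_or_lt with rfl | ha
  · simp
  have hab : 0 < a + b := by linarith
  rw [show a * P / ((a * P + b * P) / 2) = 2 * (a / (a + b)) by field_simp,
    Real.log_mul two_ne_zero (div_pos ha hab).ne']
  ring

section

open Set

variable {α : Type*} [MeasurableSpace α] {μ : Measure α}

theorem integrable_mul_log_div_add_mul {a b p : α → ℝ} (ha : Measurable a) (hb : Measurable b)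
    (hp : Measurable p) (ha0 : ∀ x, 0 ≤ a x) (hb0 : ∀ x, 0 ≤ b x) (hp0 : ∀ x, 0 ≤ p x)
    (hap : Integrable (fun x => a x * p x) μ) (hbp : Integrable (fun x => b x * p x) μ) :
    Integrable (fun x => a x * Real.log (a x / (a x + b x)) * p x) μ := by
  refine (hap.add hbp).mono' ?_ (.of_forall fun x => ?_)
  · exact ((ha.mul (Real.measurable_log.comp (ha.div (ha.add hb)))).mul hp).aestronglyMeasurable
  · rw [Real.norm_eq_abs, abs_mul, abs_of_nonneg (hp0 x), Pi.add_apply, ← add_mul]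
    exact mul_le_mul_of_nonneg_right
      (abs_mul_log_div_le (ha0 x) (le_add_of_nonneg_right (hb0 x))) (hp0 x)

theorem integrable_div_mul_of_mem_Icc {L p : α → ℝ} (hp : Integrable p μ) (hL : Measurable L)
    (hL01 : ∀ x, L x ∈ Icc (0 : ℝ) 1) (c : ℝ) : Integrable (fun x => L x / c * p x) μ :=
  hp.bdd_mul (hL.div_const c).aestronglyMeasurable (c := 1 / |c|) <| .of_forall fun x => by
    rw [Real.norm_eq_abs, abs_div, abs_of_nonneg (hL01 x).1]
    exact div_le_div_of_nonneg_right (hL01 x).2 (abs_nonneg c)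

theorem integral_div_mul_eq_one {L p : α → ℝ} {π : ℝ} (hπ : π = ∫ x, L x * p x ∂μ)
    (hπ0 : π ≠ 0) : ∫ x, L x / π * p x ∂μ = 1 := by
  simp_rw [div_mul_eq_mul_div, integral_div, ← hπ, div_self hπ0]

theorem one_sub_eq_integral_one_sub_mul {L p : α → ℝ} {π : ℝ} (hp : Integrable p μ)
    (hp1 : ∫ x, p x ∂μ = 1) (hL : Measurable L) (hL01 : ∀ x, L x ∈ Icc (0 : ℝ) 1)
    (hπ : π = ∫ x, L x * p x ∂μ) : 1 - π = ∫ x, (1 - L x) * p x ∂μ := by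
  have hLp := integrable_div_mul_of_mem_Icc hp hL hL01 1
  simp only [div_one] at hLp
  simp_rw [sub_mul, one_mul, integral_sub hp hLp, hp1, hπ]

/-- Where `p` vanishes so does `q₁` (a.e.), so `min 1` alters `π q₁ / p` only on a null set. -/
theorem exists_labelling_of_mixture {p q₀ q₁ : α → ℝ} {π : ℝ} (hp : Measurable p)
    (hp0 : ∀ x, 0 ≤ p x) (hq₁ : Measurable q₁) (hq₀0 : ∀ x, 0 ≤ q₀ x) (hq₁0 : ∀ x, 0 ≤ q₁ x)
    (hq₁1 : ∫ x, q₁ x ∂μ = 1) (hπ : π ∈ Ioo (0 : ℝ) 1)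
    (hmix : ∀ᵐ x ∂μ, π * q₁ x + (1 - π) * q₀ x = p x) :
    ∃ L : α → ℝ, Measurable L ∧ (∀ x, L x ∈ Icc (0 : ℝ) 1) ∧ π = ∫ x, L x * p x ∂μ ∧
      (q₀ =ᵐ[μ] fun x => (1 - L x) / (1 - π) * p x) ∧ (q₁ =ᵐ[μ] fun x => L x / π * p x) := by
  obtain ⟨hπ0, hπ1⟩ := hπ
  refine ⟨fun x => min 1 (π * q₁ x / p x), measurable_const.min
    ((measurable_const.mul hq₁).div hp), fun x => ⟨le_min zero_le_one
    (div_nonneg (mul_nonneg hπ0.le (hq₁0 x)) (hp0 x)), min_le_left _ _⟩, ?_⟩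
  have hLp : ∀ᵐ x ∂μ, min 1 (π * q₁ x / p x) * p x = π * q₁ x := by
    filter_upwards [hmix] with x hx
    rcases (hp0 x).eq_or_lt with hpx | hpx
    · have : q₁ x = 0 := by nlinarith [hq₀0 x, hq₁0 x]
      simp [← hpx, this]
    · rw [min_eq_right ((div_le_one hpx).2 (by nlinarith [hq₀0 x])), div_mul_cancel₀ _ hpx.ne']
  refine ⟨?_, ?_, ?_⟩
  · rw [integral_congr_ae hLp, integral_const_mul, hq₁1, mul_one]
  · filter_upwards [hLp, hmix] with x hLpx hx
    rw [div_mul_eq_mul_div, sub_mul, one_mul, hLpx, ← hx]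
    field_simp
    ring
  · filter_upwards [hLp] with x hLpx
    rw [div_mul_eq_mul_div, hLpx]
    field_simp

end

theorem JSdiv_congr_ae {n : ℕ} {a a' b b' : (Fin n → ℝ) → ℝ} (ha : a =ᵐ[volume] a')
    (hb : b =ᵐ[volume] b') : JSdiv a b = JSdiv a' b' := by
  unfold JSdiv
  congr 2 <;> exact integral_congr_ae <| by filter_upwards [ha, hb] with x hax hbx; rw [hax, hbx]

theorem JSdiv_mul_eq {n : ℕ} {p f₀ f₁ : (Fin n → ℝ) → ℝ} (hp : Measurable p)
    (hf₀ : Measurable f₀) (hf₁ : Measurable f₁) (hp0 : ∀ x, 0 ≤ p x) (hf₀0 : ∀ x, 0 ≤ f₀ x)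
    (hf₁0 : ∀ x, 0 ≤ f₁ x) (hf₀p : Integrable (fun x => f₀ x * p x))
    (hf₁p : Integrable (fun x => f₁ x * p x)) (hf₀p1 : ∫ x, f₀ x * p x = 1)
    (hf₁p1 : ∫ x, f₁ x * p x = 1) :
    JSdiv (fun x => f₀ x * p x) (fun x => f₁ x * p x) =
      (1 / 2) * (∫ x, (f₁ x * Real.log (f₁ x / (f₁ x + f₀ x)) +
          f₀ x * Real.log (f₀ x / (f₁ x + f₀ x))) * p x) + Real.log 2 := by
  have hg₀ : Integrable (fun x => f₀ x * Real.log (f₀ x / (f₁ x + f₀ x)) * p x) := by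
    simpa only [add_comm (f₀ _)] using
      integrable_mul_log_div_add_mul hf₀ hf₁ hp hf₀0 hf₁0 hp0 hf₀p hf₁p
  have hg₁ := integrable_mul_log_div_add_mul hf₁ hf₀ hp hf₁0 hf₀0 hp0 hf₁p hf₀p
  have h₀ (x) : f₀ x * p x * Real.log (f₀ x * p x / ((f₀ x * p x + f₁ x * p x) / 2)) =
      f₀ x * Real.log (f₀ x / (f₁ x + f₀ x)) * p x + f₀ x * p x * Real.log 2 := by
    rw [add_comm (f₁ x)]; exact mul_log_mul_div_half_add (hf₀0 x) (hf₁0 x) (hp0 x)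
  have h₁ (x) : f₁ x * p x * Real.log (f₁ x * p x / ((f₀ x * p x + f₁ x * p x) / 2)) =
      f₁ x * Real.log (f₁ x / (f₁ x + f₀ x)) * p x + f₁ x * p x * Real.log 2 := by
    rw [add_comm (f₀ x * p x)]; exact mul_log_mul_div_half_add (hf₁0 x) (hf₀0 x) (hp0 x)
  simp only [JSdiv, h₀, h₁, add_mul]
  rw [integral_add hg₀ (hf₀p.mul_const _), integral_add hg₁ (hf₁p.mul_const _),
    integral_add hg₁ hg₀, integral_mul_const, integral_mul_const, hf₀p1, hf₁p1]
  ring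

theorem JSdiv_labelling_eq {n : ℕ} {p L : (Fin n → ℝ) → ℝ} {π : ℝ} (hp_meas : Measurable p)
    (hp0 : ∀ x, 0 ≤ p x) (hp : Integrable p) (hp1 : ∫ x, p x = 1) (hL : Measurable L)
    (hL01 : ∀ x, L x ∈ Set.Icc (0 : ℝ) 1) (hπ : π = ∫ x, L x * p x)
    (hπ01 : π ∈ Set.Ioo (0 : ℝ) 1) :
    JSdiv (fun x => (1 - L x) / (1 - π) * p x) (fun x => L x / π * p x) =
      (1 / 2) * (∫ x, (L x / π * Real.log (L x / π / (L x / π + (1 - L x) / (1 - π))) +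
          (1 - L x) / (1 - π) * Real.log ((1 - L x) / (1 - π) /
            (L x / π + (1 - L x) / (1 - π)))) * p x) + Real.log 2 := by
  have h1L01 (x) := Set.Icc.one_sub_mem (hL01 x)
  have h1π := one_sub_eq_integral_one_sub_mul hp hp1 hL hL01 hπ
  exact JSdiv_mul_eq hp_meas ((measurable_const.sub hL).div_const _) (hL.div_const _) hp0
    (fun x => div_nonneg (h1L01 x).1 (sub_pos.2 hπ01.2).le)
    (fun x => div_nonneg (hL01 x).1 hπ01.1.le)
    (integrable_div_mul_of_mem_Icc hp (measurable_const.sub hL) h1L01 _)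
    (integrable_div_mul_of_mem_Icc hp hL hL01 _)
    (integral_div_mul_eq_one h1π (sub_pos.2 hπ01.2).ne')
    (integral_div_mul_eq_one hπ hπ01.1.ne')

/-- **Proposition 2 (Neural Bayes-DML).** The supremum of the Jensen–Shannon divergence
`JS(q₀ ‖ q₁)` over all binary mixture decompositions `π q₁ + (1−π) q₀ = p` (a.e.) of the
density `p`, with `q₀, q₁` densities and `π ∈ (0,1)`, equals the supremum over measurable
labelling functions `L : ℝⁿ → [0,1]` with `∫ L p ∈ (0,1)` of the Neural Bayes-DML objective
`½ ∫ [f₁ log(f₁/(f₁+f₀)) + f₀ log(f₀/(f₁+f₀))] p + log 2`, where `f₁ = L/∫Lp` and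
`f₀ = (1−L)/(1−∫Lp)`. -/
theorem neural_bayes_DML_sup_eq {n : ℕ}
    (p : (Fin n → ℝ) → ℝ) (hp_meas : Measurable p)
    (hp_nonneg : ∀ x, 0 ≤ p x) (hp_int : ∫ x, p x = 1) :
    sSup {r : ℝ | ∃ q₀ q₁ : (Fin n → ℝ) → ℝ, ∃ π : ℝ,
        Measurable q₀ ∧ (∀ x, 0 ≤ q₀ x) ∧ (∫ x, q₀ x) = 1 ∧
        Measurable q₁ ∧ (∀ x, 0 ≤ q₁ x) ∧ (∫ x, q₁ x) = 1 ∧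
        π ∈ Set.Ioo (0 : ℝ) 1 ∧
        (∀ᵐ x ∂(volume : Measure (Fin n → ℝ)), π * q₁ x + (1 - π) * q₀ x = p x) ∧
        r = JSdiv q₀ q₁} =
    sSup {r : ℝ | ∃ L : (Fin n → ℝ) → ℝ, ∃ π : ℝ, ∃ f₁ f₀ : (Fin n → ℝ) → ℝ,
        Measurable L ∧ (∀ x, L x ∈ Set.Icc (0 : ℝ) 1) ∧
        π = (∫ x, L x * p x) ∧ π ∈ Set.Ioo (0 : ℝ) 1 ∧
        (∀ x, f₁ x = L x / π) ∧ (∀ x, f₀ x = (1 - L x) / (1 - π)) ∧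
        r = (1 / 2) * (∫ x, (f₁ x * Real.log (f₁ x / (f₁ x + f₀ x)) +
              f₀ x * Real.log (f₀ x / (f₁ x + f₀ x))) * p x) + Real.log 2} := by
  have hp : Integrable p := .of_integral_ne_zero (by simp [hp_int])
  refine congrArg sSup (Set.ext fun r => ⟨?_, ?_⟩)
  · rintro ⟨q₀, q₁, π, -, hq₀0, -, hq₁, hq₁0, hq₁1, hπ01, hmix, rfl⟩
    obtain ⟨L, hL, hL01, hπ, hq₀L, hq₁L⟩ :=
      exists_labelling_of_mixture hp_meas hp_nonneg hq₁ hq₀0 hq₁0 hq₁1 hπ01 hmix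
    refine ⟨L, π, _, _, hL, hL01, hπ, hπ01, fun _ => rfl, fun _ => rfl, ?_⟩
    rw [JSdiv_congr_ae hq₀L hq₁L,
      JSdiv_labelling_eq hp_meas hp_nonneg hp hp_int hL hL01 hπ hπ01]
  · rintro ⟨L, π, f₁, f₀, hL, hL01, hπ, hπ01, hf₁, hf₀, rfl⟩
    obtain rfl : f₁ = fun x => L x / π := funext hf₁
    obtain rfl : f₀ = fun x => (1 - L x) / (1 - π) := funext hf₀
    have h1π : 0 < 1 - π := sub_pos.2 hπ01.2
    refine ⟨fun x => (1 - L x) / (1 - π) * p x, fun x => L x / π * p x, π,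
      ((measurable_const.sub hL).div_const _).mul hp_meas,
      fun x => mul_nonneg (div_nonneg (Set.Icc.one_sub_mem (hL01 x)).1 h1π.le) (hp_nonneg x),
      integral_div_mul_eq_one (one_sub_eq_integral_one_sub_mul hp hp_int hL hL01 hπ) h1π.ne',
      (hL.div_const _).mul hp_meas,
      fun x => mul_nonneg (div_nonneg (hL01 x).1 hπ01.1.le) (hp_nonneg x),
      integral_div_mul_eq_one hπ hπ01.1.ne', hπ01, .of_forall fun x => ?_,
      (JSdiv_labelling_eq hp_meas hp_nonneg hp hp_int hL hL01 hπ hπ01).symm⟩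
    field_simp [hπ01.1.ne', h1π.ne']
    ring
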